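/- If n is odd, then the centralizer of 𝔑 in 𝒲 is zero; that is, {D ∈ 𝒲 : [D, X] = 0 for all X ∈ 𝔑} = 0. -/
import Mathlib


/-!
A concrete model of the divided power superalgebra `O(2m,n;t)` over a field `F` of
characteristic `p`, the generalized Witt superalgebra `W(2m,n;t)`, the Hamiltonian
superalgebra `H(2m,n;t)`, their even parts `𝒲`, `𝓗`, the ideal `𝔑`, and the
exceptional maps `Φ`, `Θ`, `Ψ`, used in
"Derivations for the even part of the Hamiltonian superalgebra in positive characteristic".

Elements of `O` are recorded by their coordinates with respect to the standard basis
`x^(α) x^u`, where `α i < p ^ t i` and `u ⊆ {1,…,n}` (odd variables).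
A superderivation `Σ aᵢ ∂ᵢ ∈ W` is recorded by its tuple of coefficients `aᵢ ∈ O`.
-/

namespace HamEven

/-- Multi-indices `α` with `α i ≤ π i = p ^ t i - 1`. -/
abbrev MIdx (p m : ℕ) (t : Fin (2 * m) → ℕ) : Type := ∀ i : Fin (2 * m), Fin (p ^ t i)

/-- Basis indices `(α, u)` of `O(2m,n;t)`, i.e. `x^(α) x^u`. -/
abbrev BIdx (p m n : ℕ) (t : Fin (2 * m) → ℕ) : Type := MIdx p m t × Finset (Fin n)

/-- The underlying space of `O(2m,n;t)`: coordinates w.r.t. the basis `x^(α)x^u`. -/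
abbrev O (p m n : ℕ) (t : Fin (2 * m) → ℕ) (F : Type) [Field F] : Type := BIdx p m n t → F

/-- The index set `Y = Y₀ ∪ Y₁` of the variables. -/
abbrev Y (m n : ℕ) : Type := Fin (2 * m) ⊕ Fin n

/-- The underlying space of `W(2m,n;t)`: a tuple `(aᵢ)` stands for `Σ aᵢ ∂ᵢ`. -/
abbrev W (p m n : ℕ) (t : Fin (2 * m) → ℕ) (F : Type) [Field F] : Type := Y m n → O p m n t F

/-- The sign `ε(u,v)` with `x^u x^v = ε(u,v) x^(u ∪ v)` for disjoint `u, v`. -/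
def sgn (n : ℕ) (F : Type) [Field F] (u v : Finset (Fin n)) : F :=
  (-1 : F) ^ ((u ×ˢ v).filter fun q => q.2 < q.1).card

/-- Multiplication of the divided power superalgebra `O(2m,n;t)`:
`x^(α)x^u · x^(β)x^v = ε(u,v) (∏ᵢ binom (αᵢ+βᵢ) αᵢ) x^(α+β) x^(u∪v)` for disjoint
`u,v` (and `0` if `u ∩ v ≠ ∅` or `α + β ∉ A`). -/
def mul (p m n : ℕ) (t : Fin (2 * m) → ℕ) (F : Type) [Field F]
    (f g : O p m n t F) : O p m n t F := fun b =>
  ∑ α : MIdx p m t, ∑ u ∈ b.2.powerset,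
    if ∀ i, (α i : ℕ) ≤ (b.1 i : ℕ) then
      sgn n F u (b.2 \ u) * (∏ i, ((b.1 i : ℕ).choose (α i : ℕ) : F)) *
        f (α, u) *
        g (⟨fun i => (⟨(b.1 i : ℕ) - (α i : ℕ),
              lt_of_le_of_lt (Nat.sub_le _ _) (b.1 i).isLt⟩ : Fin (p ^ t i)), b.2 \ u⟩)
    else 0

/-- The superderivation `∂ᵢ` for an even index `i ∈ Y₀`. -/
def pdE (p m n : ℕ) (t : Fin (2 * m) → ℕ) (F : Type) [Field F]
    (i : Fin (2 * m)) (f : O p m n t F) : O p m n t F := fun b =>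
  if h : (b.1 i : ℕ) + 1 < p ^ t i then
    f (⟨Function.update b.1 i (⟨(b.1 i : ℕ) + 1, h⟩ : Fin (p ^ t i)), b.2⟩)
  else 0

/-- The superderivation `∂ₖ` for an odd index `k ∈ Y₁`. -/
def pdO (p m n : ℕ) (t : Fin (2 * m) → ℕ) (F : Type) [Field F]
    (k : Fin n) (f : O p m n t F) : O p m n t F := fun b =>
  if k ∈ b.2 then 0
  else ((-1 : F) ^ (b.2.filter fun j => j < k).card) * f (b.1, insert k b.2)

/-- The superderivation `∂ᵢ`, `i ∈ Y`. -/
def pd (p m n : ℕ) (t : Fin (2 * m) → ℕ) (F : Type) [Field F]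
    (i : Y m n) (f : O p m n t F) : O p m n t F :=
  match i with
  | Sum.inl i => pdE p m n t F i f
  | Sum.inr k => pdO p m n t F k f

/-- The action of `D = Σ aᵢ ∂ᵢ ∈ W` on `O`: `D(f) = Σ aᵢ ∂ᵢ(f)`. -/
def act (p m n : ℕ) (t : Fin (2 * m) → ℕ) (F : Type) [Field F]
    (D : W p m n t F) (f : O p m n t F) : O p m n t F :=
  ∑ i : Y m n, mul p m n t F (D i) (pd p m n t F i f)

/-- Projection of `f ∈ O` onto its even part (w.r.t. the ℤ₂-grading). -/
def evenO (p m n : ℕ) (t : Fin (2 * m) → ℕ) (F : Type) [Field F]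
    (f : O p m n t F) : O p m n t F := fun b => if b.2.card % 2 = 0 then f b else 0

/-- Projection of `f ∈ O` onto its odd part. -/
def oddO (p m n : ℕ) (t : Fin (2 * m) → ℕ) (F : Type) [Field F]
    (f : O p m n t F) : O p m n t F := fun b => if b.2.card % 2 = 1 then f b else 0

/-- Projection of `D ∈ W` onto its odd part (the coefficient of `∂ᵢ` is taken of
parity opposite to that of `∂ᵢ`). -/
def oddW (p m n : ℕ) (t : Fin (2 * m) → ℕ) (F : Type) [Field F]
    (D : W p m n t F) : W p m n t F := fun i =>
  match i with
  | Sum.inl j => oddO p m n t F (D (Sum.inl j))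
  | Sum.inr k => evenO p m n t F (D (Sum.inr k))

/-- The super-bracket of `W`.  On homogeneous `D = Σ aᵢ∂ᵢ`, `E = Σ bⱼ∂ⱼ` it is
`[D,E] = Σ D(bⱼ)∂ⱼ - (-1)^{p(D)p(E)} Σ E(aᵢ)∂ᵢ`, extended bilinearly; this gives the
closed formula `[D,E] = D(E) - E(D) + 2 E₁(D₁)` used here. -/
def bra (p m n : ℕ) (t : Fin (2 * m) → ℕ) (F : Type) [Field F]
    (D E : W p m n t F) : W p m n t F := fun j =>
  act p m n t F D (E j) - act p m n t F E (D j)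
    + act p m n t F (oddW p m n t F E) (oddW p m n t F D j)
    + act p m n t F (oddW p m n t F E) (oddW p m n t F D j)

/-- `τ(i)` for `i ∈ Y₀`. -/
def tauF (m : ℕ) (F : Type) [Field F] (i : Fin (2 * m)) : F :=
  if (i : ℕ) < m then 1 else -1

/-- `i ↦ i′` on `Y₀`. -/
def primeE (m : ℕ) (i : Fin (2 * m)) : Fin (2 * m) :=
  if h : (i : ℕ) < m then ⟨(i : ℕ) + m, by have := i.isLt; omega⟩
  else ⟨(i : ℕ) - m, by have := i.isLt; omega⟩

/-- The linear map `D_H : O → W`,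
`D_H(a) = Σ_{i ∈ Y} τ(i) (-1)^{μ(i) p(a)} ∂ᵢ(a) ∂ᵢ′` (on ℤ₂-homogeneous `a`,
extended linearly): the coefficient of `∂ⱼ` is `τ(j′) (-1)^{μ(j′)p(a)} ∂_{j′}(a)`. -/
def DH (p m n : ℕ) (t : Fin (2 * m) → ℕ) (F : Type) [Field F]
    (a : O p m n t F) : W p m n t F := fun j =>
  match j with
  | Sum.inl j' =>
      tauF m F (primeE m j') •
        (pdE p m n t F (primeE m j') (evenO p m n t F a)
          + pdE p m n t F (primeE m j') (oddO p m n t F a))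
  | Sum.inr k =>
      pdO p m n t F k (evenO p m n t F a) - pdO p m n t F k (oddO p m n t F a)

/-- The basis element `x^(α) x^u` of `O`. -/
def xE (p m n : ℕ) (t : Fin (2 * m) → ℕ) (F : Type) [Field F]
    (α : MIdx p m t) (u : Finset (Fin n)) : O p m n t F := fun b =>
  if b = (α, u) then 1 else 0

/-- The element `x^ω = x_{2m+1} ⋯ x_{2m+n}` of `O`. -/
def xOmega (p m n : ℕ) (t : Fin (2 * m) → ℕ) (F : Type) [Field F] : O p m n t F := fun b =>
  if (∀ i, (b.1 i : ℕ) = 0) ∧ b.2 = Finset.univ then 1 else 0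

/-- The identity `1 ∈ O`. -/
def oneO (p m n : ℕ) (t : Fin (2 * m) → ℕ) (F : Type) [Field F] : O p m n t F := fun b =>
  if (∀ i, (b.1 i : ℕ) = 0) ∧ b.2 = ∅ then 1 else 0

/-- The odd variable `xₖ ∈ O`, `k ∈ Y₁`. -/
def xOdd (p m n : ℕ) (t : Fin (2 * m) → ℕ) (F : Type) [Field F] (k : Fin n) :
    O p m n t F := fun b =>
  if (∀ i, (b.1 i : ℕ) = 0) ∧ b.2 = {k} then 1 else 0

/-- `Γ′ = Σ_{r ∈ Y₁} x_r ∂_r ∈ 𝒲`. -/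
def GammaP (p m n : ℕ) (t : Fin (2 * m) → ℕ) (F : Type) [Field F] : W p m n t F := fun j =>
  match j with
  | Sum.inl _ => 0
  | Sum.inr k => xOdd p m n t F k

/-- The element `∂_r ∈ W` for `r ∈ Y₀`. -/
def delW (p m n : ℕ) (t : Fin (2 * m) → ℕ) (F : Type) [Field F] (r : Fin (2 * m)) :
    W p m n t F := fun j =>
  if j = Sum.inl r then oneO p m n t F else 0

/-- `𝒲`, the even part of `W(2m,n;t)`: the term `a ∂ⱼ` with `a = x^(α)x^u` is even iff
`|u| + μ(j)` is even. -/
def calW (p m n : ℕ) (t : Fin (2 * m) → ℕ) (F : Type) [Field F] : Set (W p m n t F) :=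
  {D | ∀ (j : Y m n) (b : BIdx p m n t),
    ¬ ((b.2.card + (match j with | Sum.inl _ => 0 | Sum.inr _ => 1)) % 2 = 0) → D j b = 0}

/-- The predicate `α = π`, i.e. `αᵢ = p ^ tᵢ - 1` for all `i`. -/
def isPi (p m : ℕ) (t : Fin (2 * m) → ℕ) (α : MIdx p m t) : Prop :=
  ∀ i, (α i : ℕ) = p ^ t i - 1

/-- The predicate `α = q εᵢ`. -/
def isSingle (p m : ℕ) (t : Fin (2 * m) → ℕ) (α : MIdx p m t) (i : Fin (2 * m))
    (q : ℕ) : Prop :=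
  (α i : ℕ) = q ∧ ∀ j, j ≠ i → (α j : ℕ) = 0

/-- `𝓗`, the even part of the Hamiltonian superalgebra `H(2m,n;t)`:
the span of the `D_H(x^(α)x^u)` with `|u|` even and `(α,u) ≠ (π,ω)`. -/
def calH (p m n : ℕ) (t : Fin (2 * m) → ℕ) (F : Type) [Field F] :
    Submodule F (W p m n t F) :=
  Submodule.span F {D | ∃ (α : MIdx p m t) (u : Finset (Fin n)),
    Even u.card ∧ ¬(isPi p m t α ∧ u = Finset.univ) ∧ D = DH p m n t F (xE p m n t F α u)}

/-- The ideal `𝔑` of `𝓗`: the span of the `D_H(x^(α)x^u)` with `|u|` even,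
`(α,u) ≠ (π,ω)` and `(α,u) ≠ (π,∅)`. -/
def frakN (p m n : ℕ) (t : Fin (2 * m) → ℕ) (F : Type) [Field F] :
    Submodule F (W p m n t F) :=
  Submodule.span F {D | ∃ (α : MIdx p m t) (u : Finset (Fin n)),
    Even u.card ∧ ¬(isPi p m t α ∧ u = Finset.univ) ∧ ¬(isPi p m t α ∧ u = ∅) ∧
    D = DH p m n t F (xE p m n t F α u)}

/-- The ℤ-degree of the basis element `x^(α)x^u ∈ O`. -/
def degB (p m n : ℕ) (t : Fin (2 * m) → ℕ) (b : BIdx p m n t) : ℕ :=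
  (∑ i, (b.1 i : ℕ)) + b.2.card

/-- `D ∈ W_[k]`: all coefficients of `D` are concentrated in `O`-degree `k + 1`. -/
def inDeg (p m n : ℕ) (t : Fin (2 * m) → ℕ) (F : Type) [Field F]
    (k : ℤ) (D : W p m n t F) : Prop :=
  ∀ (j : Y m n) (b : BIdx p m n t), (degB p m n t b : ℤ) - 1 ≠ k → D j b = 0

/-- `D` lies in the top `W_[-1] ⊕ W_[0]` (so the order of its coefficients is `≤ 1`). -/
def inTop (p m n : ℕ) (t : Fin (2 * m) → ℕ) (F : Type) [Field F]
    (D : W p m n t F) : Prop :=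
  ∀ (j : Y m n) (b : BIdx p m n t),
    (degB p m n t b : ℤ) ≠ 0 → (degB p m n t b : ℤ) ≠ 1 → D j b = 0

/-- `φ : S → W` is `F`-linear. -/
def IsLinearOn (p m n : ℕ) (t : Fin (2 * m) → ℕ) (F : Type) [Field F]
    (S : Submodule F (W p m n t F)) (φ : S → W p m n t F) : Prop :=
  (∀ x y : S, φ (x + y) = φ x + φ y) ∧ ∀ (c : F) (x : S), φ (c • x) = c • φ x

/-- `φ ∈ Der(S, 𝒲)`: an `F`-linear map `S → 𝒲 ⊆ W` with
`φ([x,y]) = [x, φ(y)] - [y, φ(x)]` whenever `x, y, [x,y] ∈ S`. -/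
def IsDerOn (p m n : ℕ) (t : Fin (2 * m) → ℕ) (F : Type) [Field F]
    (S : Submodule F (W p m n t F)) (φ : S → W p m n t F) : Prop :=
  IsLinearOn p m n t F S φ ∧ (∀ x : S, φ x ∈ calW p m n t F) ∧
  ∀ (x y : S) (h : bra p m n t F (↑x) (↑y) ∈ S),
    φ ⟨bra p m n t F (↑x) (↑y), h⟩ =
      bra p m n t F (↑x) (φ y) - bra p m n t F (↑y) (φ x)

/-- `φ ∈ Der_[r](S, W)`: `φ` is ℤ-homogeneous of ℤ-degree `r`, i.e.
`φ(S_[k]) ⊆ W_[r+k]` for all `k`. -/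
def IsHomogOn (p m n : ℕ) (t : Fin (2 * m) → ℕ) (F : Type) [Field F]
    (S : Submodule F (W p m n t F)) (r : ℤ) (φ : S → W p m n t F) : Prop :=
  ∀ (k : ℤ) (x : S), inDeg p m n t F k (↑x) → inDeg p m n t F (r + k) (φ x)

/-- The exceptional map `Φ⁽q⁾ᵢ : 𝓗 → 𝒲`, `D_H(f) ↦ ∂ᵢ^(p^q)(f) D_H(x^ω)`, extended to
`W` using that the `∂ᵢ′`-coefficient of `D_H(f)` is `τ(i) ∂ᵢ(f)` for even `f`. -/
def PhiW (p m n : ℕ) (t : Fin (2 * m) → ℕ) (F : Type) [Field F]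
    (i : Fin (2 * m)) (q : ℕ) (D : W p m n t F) : W p m n t F := fun j =>
  mul p m n t F
    ((pdE p m n t F i)^[p ^ q - 1] (tauF m F i • D (Sum.inl (primeE m i))))
    (DH p m n t F (xOmega p m n t F) j)

/-- The exceptional map `Θ⁽q⁾ᵢ : 𝓗 → 𝒲`,
`D_H(f) ↦ x^ω D_H(∂ᵢ^(p^q)(f)) = x^ω (ad ∂ᵢ)^(p^q)(D_H(f))`. -/
def ThetaW (p m n : ℕ) (t : Fin (2 * m) → ℕ) (F : Type) [Field F]
    (i : Fin (2 * m)) (q : ℕ) (D : W p m n t F) : W p m n t F := fun j =>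
  mul p m n t F (xOmega p m n t F) ((pdE p m n t F i)^[p ^ q] (D j))

/-- The exceptional map `Ψ⁽ⁱ⁾ : 𝓗 → 𝒲`, `D_H(f) ↦ ∂ᵢ∂ᵢ′(f) D_H(x^ω)`. -/
def PsiW (p m n : ℕ) (t : Fin (2 * m) → ℕ) (F : Type) [Field F]
    (i : Fin (2 * m)) (D : W p m n t F) : W p m n t F := fun j =>
  mul p m n t F
    (pdE p m n t F (primeE m i) (tauF m F i • D (Sum.inl (primeE m i))))
    (DH p m n t F (xOmega p m n t F) j)

/-- `(ad ∂_r)^e : W → W`. -/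
def adPow (p m n : ℕ) (t : Fin (2 * m) → ℕ) (F : Type) [Field F]
    (r : Fin (2 * m)) (e : ℕ) : W p m n t F → W p m n t F :=
  (fun D => bra p m n t F (delW p m n t F r) D)^[e]

section AuxLemmas
variable {p m n : ℕ} {t : Fin (2 * m) → ℕ} {F : Type} [Field F]



lemma xE_apply (α : MIdx p m t) (u : Finset (Fin n)) (b : BIdx p m n t) :
    xE p m n t F α u b = if b = (α, u) then 1 else 0 := rfl

lemma sgn_left_empty (v : Finset (Fin n)) : sgn n F ∅ v = 1 := by
  simp [sgn]

lemma sgn_right_empty (u : Finset (Fin n)) : sgn n F u ∅ = 1 := by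
  simp [sgn]

lemma sgn_singleton (r : Fin n) (s : Finset (Fin n)) :
    sgn n F {r} s = (-1 : F) ^ ((s.filter fun j => j < r).card) := by
  unfold sgn
  congr 1
  rw [Finset.singleton_product, Finset.filter_map, Finset.card_map]
  rfl

lemma mul_zero_left (g : O p m n t F) : mul p m n t F 0 g = 0 := by
  funext b; simp [mul]

lemma mul_zero_right (f : O p m n t F) : mul p m n t F f 0 = 0 := by
  funext b; simp [mul]

lemma mul_smul_left (c : F) (f g : O p m n t F) :
    mul p m n t F (c • f) g = c • mul p m n t F f g := by
  funext b
  simp only [mul, Pi.smul_apply, smul_eq_mul, Finset.mul_sum]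
  refine Finset.sum_congr rfl fun α _ => Finset.sum_congr rfl fun u _ => ?_
  split <;> ring

lemma mul_smul_right (c : F) (f g : O p m n t F) :
    mul p m n t F f (c • g) = c • mul p m n t F f g := by
  funext b
  simp only [mul, Pi.smul_apply, smul_eq_mul, Finset.mul_sum]
  refine Finset.sum_congr rfl fun α _ => Finset.sum_congr rfl fun u _ => ?_
  split <;> ring

lemma pd_smul (i : Y m n) (c : F) (f : O p m n t F) :
    pd p m n t F i (c • f) = c • pd p m n t F i f := by
  cases i with
  | inl j =>
    funext b
    simp only [pd, pdE, Pi.smul_apply, smul_eq_mul]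
    split <;> simp
  | inr k =>
    funext b
    simp only [pd, pdO, Pi.smul_apply, smul_eq_mul]
    split <;> ring

lemma pd_zero (i : Y m n) : pd p m n t F i (0 : O p m n t F) = 0 := by
  cases i with
  | inl j => funext b; simp [pd, pdE]
  | inr k => funext b; simp [pdO, pd]

lemma act_apply (D : W p m n t F) (f : O p m n t F) (b : BIdx p m n t) :
    act p m n t F D f b = ∑ i : Y m n, mul p m n t F (D i) (pd p m n t F i f) b := by
  unfold act; rw [Finset.sum_apply]

lemma act_zero_right (D : W p m n t F) : act p m n t F D (0 : O p m n t F) = 0 := by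
  funext b
  rw [act_apply]
  simp [pd_zero, mul_zero_right]

lemma act_of_pd_zero (D : W p m n t F) (f : O p m n t F)
    (h : ∀ i, pd p m n t F i f = 0) : act p m n t F D f = 0 := by
  funext b
  rw [act_apply]
  simp [h, mul_zero_right]

lemma act_single (i₀ : Y m n) (g f : O p m n t F) :
    act p m n t F (fun i => if i = i₀ then g else 0) f
      = mul p m n t F g (pd p m n t F i₀ f) := by
  funext b
  rw [act_apply, Fintype.sum_eq_single i₀]
  · simp
  · intro i hi
    simp [hi, mul_zero_left]



lemma mul_xE_left (α : MIdx p m t) (u : Finset (Fin n)) (g : O p m n t F) (b : BIdx p m n t) :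
    mul p m n t F (xE p m n t F α u) g b =
      if (∀ i, (α i : ℕ) ≤ (b.1 i : ℕ)) ∧ u ⊆ b.2 then
        sgn n F u (b.2 \ u) * (∏ i, ((b.1 i : ℕ).choose (α i : ℕ) : F)) *
          g (⟨fun i => (⟨(b.1 i : ℕ) - (α i : ℕ),
              lt_of_le_of_lt (Nat.sub_le _ _) (b.1 i).isLt⟩ : Fin (p ^ t i)), b.2 \ u⟩)
      else 0 := by
  unfold mul
  refine (Fintype.sum_eq_single α fun β hβ => Finset.sum_eq_zero fun v hv => ?_).trans ?_
  · split <;> simp [xE, Prod.ext_iff, hβ]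
  · by_cases hu : u ⊆ b.2
    · refine (Finset.sum_eq_single_of_mem u (Finset.mem_powerset.2 hu)
        (fun v hv hvu => ?_)).trans ?_
      · split <;> simp [xE, Prod.ext_iff, hvu]
      · by_cases hc : ∀ i, (α i : ℕ) ≤ (b.1 i : ℕ)
        · rw [if_pos hc, if_pos ⟨hc, hu⟩]
          simp [xE]
        · rw [if_neg hc, if_neg (fun h => hc h.1)]
    · rw [if_neg (fun h => hu h.2)]
      refine Finset.sum_eq_zero fun v hv => ?_
      have hvu : v ≠ u := fun h => hu (h ▸ Finset.mem_powerset.1 hv)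
      split <;> simp [xE, Prod.ext_iff, hvu]



lemma mul_xE_right (β : MIdx p m t) (v : Finset (Fin n)) (g : O p m n t F) (b : BIdx p m n t) :
    mul p m n t F g (xE p m n t F β v) b =
      if (∀ i, (β i : ℕ) ≤ (b.1 i : ℕ)) ∧ v ⊆ b.2 then
        sgn n F (b.2 \ v) (b.2 \ (b.2 \ v)) *
          (∏ i, ((b.1 i : ℕ).choose ((b.1 i : ℕ) - (β i : ℕ)) : F)) *
          g (⟨fun i => (⟨(b.1 i : ℕ) - (β i : ℕ),
              lt_of_le_of_lt (Nat.sub_le _ _) (b.1 i).isLt⟩ : Fin (p ^ t i)), b.2 \ v⟩)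
      else 0 := by
  set α₀ : MIdx p m t := fun i => (⟨(b.1 i : ℕ) - (β i : ℕ),
      lt_of_le_of_lt (Nat.sub_le _ _) (b.1 i).isLt⟩ : Fin (p ^ t i)) with hα₀
  unfold mul
  refine (Fintype.sum_eq_single α₀ fun γ hγ => Finset.sum_eq_zero fun w hw => ?_).trans ?_
  · -- off-diagonal in α: xE factor vanishes
    split
    · rename_i hc
      have hx : xE p m n t F β v
          (⟨fun i => (⟨(b.1 i : ℕ) - (γ i : ℕ),
              lt_of_le_of_lt (Nat.sub_le _ _) (b.1 i).isLt⟩ : Fin (p ^ t i)), b.2 \ w⟩) = 0 := by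
        rw [xE_apply, if_neg]
        intro hEq
        apply hγ
        have h1 := congrArg Prod.fst hEq
        funext i
        have h2 : ((b.1 i : ℕ) - (γ i : ℕ) : ℕ) = (β i : ℕ) :=
          congrArg (fun q => ((q i : ℕ))) h1
        have h3 := hc i
        exact Fin.ext (show (γ i : ℕ) = (b.1 i : ℕ) - (β i : ℕ) by omega)
      rw [hx, mul_zero]
    · rfl
  · by_cases hv : v ⊆ b.2
    · refine (Finset.sum_eq_single_of_mem (b.2 \ v)
        (Finset.mem_powerset.2 (Finset.sdiff_subset)) (fun w hw hwv => ?_)).trans ?_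
      · -- off-diagonal in w
        split
        · have hx : xE p m n t F β v
              (⟨fun i => (⟨(b.1 i : ℕ) - (α₀ i : ℕ),
                  lt_of_le_of_lt (Nat.sub_le _ _) (b.1 i).isLt⟩ : Fin (p ^ t i)), b.2 \ w⟩) = 0 := by
            rw [xE_apply, if_neg]
            intro hEq
            apply hwv
            have h2 := congrArg Prod.snd hEq
            simp only at h2
            have hwb : w ⊆ b.2 := Finset.mem_powerset.1 hw
            rw [← Finset.sdiff_sdiff_eq_self hwb, h2]
          rw [hx, mul_zero]
        · rfl
      · -- diagonal term
        have hc : ∀ i, (α₀ i : ℕ) ≤ (b.1 i : ℕ) := fun i => Nat.sub_le _ _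
        rw [if_pos hc]
        by_cases hβ : ∀ i, (β i : ℕ) ≤ (b.1 i : ℕ)
        · rw [if_pos ⟨hβ, hv⟩]
          have hx : xE p m n t F β v
              (⟨fun i => (⟨(b.1 i : ℕ) - (α₀ i : ℕ),
                  lt_of_le_of_lt (Nat.sub_le _ _) (b.1 i).isLt⟩ : Fin (p ^ t i)), b.2 \ (b.2 \ v)⟩) = 1 := by
            rw [xE_apply, if_pos]
            refine Prod.ext ?_ ?_
            · funext i
              have h3 := hβ i
              exact Fin.ext
                (show (b.1 i : ℕ) - ((b.1 i : ℕ) - (β i : ℕ)) = (β i : ℕ) by omega)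
            · simpa using Finset.sdiff_sdiff_eq_self hv
          rw [hx, mul_one]
        · rw [if_neg (fun h => hβ h.1)]
          push_neg at hβ
          obtain ⟨i₁, hi₁⟩ := hβ
          have hx : xE p m n t F β v
              (⟨fun i => (⟨(b.1 i : ℕ) - (α₀ i : ℕ),
                  lt_of_le_of_lt (Nat.sub_le _ _) (b.1 i).isLt⟩ : Fin (p ^ t i)), b.2 \ (b.2 \ v)⟩) = 0 := by
            rw [xE_apply, if_neg]
            intro hEq
            have h1 : ((b.1 i₁ : ℕ) - ((b.1 i₁ : ℕ) - (β i₁ : ℕ)) : ℕ) = (β i₁ : ℕ) :=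
              congrArg (fun q => ((q.1 i₁ : ℕ))) hEq
            omega
          rw [hx, mul_zero]
    · rw [if_neg (fun h => hv h.2)]
      refine Finset.sum_eq_zero fun w hw => ?_
      split
      · have hx : xE p m n t F β v
            (⟨fun i => (⟨(b.1 i : ℕ) - (α₀ i : ℕ),
                lt_of_le_of_lt (Nat.sub_le _ _) (b.1 i).isLt⟩ : Fin (p ^ t i)), b.2 \ w⟩) = 0 := by
          rw [xE_apply, if_neg]
          intro hEq
          have h2 := congrArg Prod.snd hEq
          simp only at h2
          exact hv (h2 ▸ Finset.sdiff_subset)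
        rw [hx, mul_zero]
      · rfl


def sing (t : Fin (2 * m) → ℕ) (q : ℕ) (h : ∀ j, q < p ^ t j) (i : Fin (2 * m)) :
    MIdx p m t :=
  fun j => ⟨if j = i then q else 0, by
    split
    · exact h j
    · exact lt_of_le_of_lt (Nat.zero_le _) (h j)⟩

lemma sing_val (q : ℕ) (h : ∀ j, q < p ^ t j) (i j : Fin (2 * m)) :
    ((sing t q h i) j : ℕ) = if j = i then q else 0 := rfl

lemma pdO_apply (k : Fin n) (f : O p m n t F) (b : BIdx p m n t) :
    pdO p m n t F k f b = if k ∈ b.2 then 0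
      else ((-1 : F) ^ (b.2.filter fun j => j < k).card) * f (b.1, insert k b.2) := rfl

lemma pdE_zero (i : Fin (2 * m)) : pdE p m n t F i (0 : O p m n t F) = 0 := by
  funext b; simp [pdE]

lemma pdO_zero (k : Fin n) : pdO p m n t F k (0 : O p m n t F) = 0 := by
  funext b; simp [pdO]

lemma pdE_xE_sing (q : ℕ) (hq1 : ∀ j, q + 1 < p ^ t j) (hq : ∀ j, q < p ^ t j)
    (s' i : Fin (2 * m)) (u : Finset (Fin n)) :
    pdE p m n t F i (xE p m n t F (sing t (q + 1) hq1 s') u)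
      = if i = s' then xE p m n t F (sing t q hq s') u else 0 := by
  funext b
  simp only [pdE]
  split
  · rename_i hb
    by_cases his : i = s'
    · subst his
      rw [if_pos rfl, xE_apply, xE_apply]
      refine if_congr ?_ rfl rfl
      constructor
      · rintro hEq
        have h1 : (Function.update b.1 i (⟨(b.1 i : ℕ) + 1, hb⟩ : Fin (p ^ t i)))
            = sing t (q + 1) hq1 i := congrArg Prod.fst hEq
        have h2 : b.2 = u := congrArg Prod.snd hEq
        refine Prod.ext ?_ h2
        funext j
        have h3 : ((Function.update b.1 i (⟨(b.1 i : ℕ) + 1, hb⟩ : Fin (p ^ t i))) j : ℕ)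
            = ((sing t (q + 1) hq1 i) j : ℕ) := congrArg (fun f => ((f j : ℕ))) h1
        by_cases hj : j = i
        · subst hj
          rw [Function.update_self] at h3
          have h4 : (b.1 j : ℕ) + 1 = ((sing t (q + 1) hq1 j) j : ℕ) := h3
          rw [sing_val, if_pos rfl] at h4
          exact Fin.ext (by rw [sing_val, if_pos rfl]; omega)
        · rw [Function.update_of_ne hj] at h3
          rw [sing_val, if_neg hj] at h3
          exact Fin.ext (by rw [sing_val, if_neg hj]; exact h3)
      · rintro hEq
        have h1 : b.1 = sing t q hq i := congrArg Prod.fst hEq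
        have h2 : b.2 = u := congrArg Prod.snd hEq
        refine Prod.ext ?_ h2
        show Function.update b.1 i (⟨(b.1 i : ℕ) + 1, hb⟩ : Fin (p ^ t i))
          = sing t (q + 1) hq1 i
        funext j
        refine Fin.ext ?_
        have h3 : (b.1 j : ℕ) = ((sing t q hq i) j : ℕ) := congrArg (fun f => ((f j : ℕ))) h1
        by_cases hj : j = i
        · subst hj
          rw [Function.update_self]
          show (b.1 j : ℕ) + 1 = ((sing t (q + 1) hq1 j) j : ℕ)
          rw [sing_val, if_pos rfl] at h3 ⊢
          omega
        · rw [Function.update_of_ne hj]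
          rw [sing_val, if_neg hj] at h3 ⊢
          exact h3
    · rw [if_neg his, xE_apply, if_neg, Pi.zero_apply]
      intro hEq
      have h3 : ((Function.update b.1 i (⟨(b.1 i : ℕ) + 1, hb⟩ : Fin (p ^ t i))) i : ℕ)
          = ((sing t (q + 1) hq1 s') i : ℕ) :=
        congrArg (fun q => ((q.1 i : ℕ))) hEq
      rw [Function.update_self] at h3
      have h4 : (b.1 i : ℕ) + 1 = ((sing t (q + 1) hq1 s') i : ℕ) := h3
      rw [sing_val, if_neg his] at h4
      omega
  · rename_i hb
    by_cases his : i = s'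
    · subst his
      rw [if_pos rfl, xE_apply, if_neg]
      intro hEq
      have h1 : (b.1 i : ℕ) = ((sing t q hq i) i : ℕ) :=
        congrArg (fun q => ((q.1 i : ℕ))) hEq
      rw [sing_val, if_pos rfl] at h1
      exact hb (by rw [h1]; exact hq1 i)
    · rw [if_neg his, Pi.zero_apply]

lemma pdE_xE_z (hq : ∀ j, 0 < p ^ t j) (s' i : Fin (2 * m)) (u : Finset (Fin n)) :
    pdE p m n t F i (xE p m n t F (sing t 0 hq s') u) = 0 := by
  funext b
  simp only [pdE, Pi.zero_apply]
  split
  · rename_i hb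
    rw [xE_apply, if_neg]
    intro hEq
    have h3 : ((Function.update b.1 i (⟨(b.1 i : ℕ) + 1, hb⟩ : Fin (p ^ t i))) i : ℕ)
        = ((sing t 0 hq s') i : ℕ) :=
      congrArg (fun q => ((q.1 i : ℕ))) hEq
    rw [Function.update_self] at h3
    have h4 : (b.1 i : ℕ) + 1 = ((sing t 0 hq s') i : ℕ) := h3
    rw [sing_val] at h4
    split at h4 <;> omega
  · rfl

lemma pdO_xE_of_mem (k : Fin n) (α : MIdx p m t) (u : Finset (Fin n)) (hk : k ∈ u) :
    pdO p m n t F k (xE p m n t F α u)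
      = ((-1 : F) ^ (((u.erase k).filter fun j => j < k).card))
          • xE p m n t F α (u.erase k) := by
  funext b
  rw [pdO_apply, Pi.smul_apply, smul_eq_mul]
  by_cases hb : k ∈ b.2
  · rw [if_pos hb, xE_apply, if_neg, mul_zero]
    intro hEq
    have h2 : b.2 = u.erase k := congrArg Prod.snd hEq
    exact (Finset.notMem_erase k u) (h2 ▸ hb)
  · rw [if_neg hb]
    by_cases hbe : b = (α, u.erase k)
    · subst hbe
      rw [xE_apply, xE_apply, if_pos rfl, if_pos]
      exact Prod.ext rfl (Finset.insert_erase hk)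
    · rw [xE_apply, xE_apply, if_neg hbe, if_neg, mul_zero, mul_zero]
      intro hEq
      apply hbe
      have h1 : b.1 = α := congrArg Prod.fst hEq
      have h2 : insert k b.2 = u := congrArg Prod.snd hEq
      refine Prod.ext h1 ?_
      show b.2 = u.erase k
      rw [← h2, Finset.erase_insert hb]

lemma pdO_xE_of_notMem (k : Fin n) (α : MIdx p m t) (u : Finset (Fin n)) (hk : k ∉ u) :
    pdO p m n t F k (xE p m n t F α u) = 0 := by
  funext b
  rw [pdO_apply, Pi.zero_apply]
  split
  · rfl
  · rename_i hb
    rw [xE_apply, if_neg, mul_zero]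
    intro hEq
    have h2 : insert k b.2 = u := congrArg Prod.snd hEq
    exact hk (h2 ▸ Finset.mem_insert_self k b.2)

lemma evenO_xE (α : MIdx p m t) (u : Finset (Fin n)) (hu : u.card % 2 = 0) :
    evenO p m n t F (xE p m n t F α u) = xE p m n t F α u := by
  funext b
  unfold evenO
  split
  · rfl
  · rename_i hb
    rw [xE_apply, if_neg]
    intro hEq
    have h2 : b.2 = u := congrArg Prod.snd hEq
    rw [h2] at hb
    exact hb hu

lemma oddO_xE (α : MIdx p m t) (u : Finset (Fin n)) (hu : u.card % 2 = 0) :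
    oddO p m n t F (xE p m n t F α u) = 0 := by
  funext b
  unfold oddO
  split
  · rename_i hb
    rw [xE_apply, if_neg, Pi.zero_apply]
    intro hEq
    have h2 : b.2 = u := congrArg Prod.snd hEq
    rw [h2] at hb
    omega
  · rfl

lemma DH_xE_inl (α : MIdx p m t) (u : Finset (Fin n)) (hu : u.card % 2 = 0) (j : Fin (2 * m)) :
    DH p m n t F (xE p m n t F α u) (Sum.inl j)
      = tauF m F (primeE m j) • pdE p m n t F (primeE m j) (xE p m n t F α u) := by
  simp only [DH, evenO_xE α u hu, oddO_xE α u hu, pdE_zero, add_zero]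

lemma DH_xE_inr (α : MIdx p m t) (u : Finset (Fin n)) (hu : u.card % 2 = 0) (k : Fin n) :
    DH p m n t F (xE p m n t F α u) (Sum.inr k) = pdO p m n t F k (xE p m n t F α u) := by
  simp only [DH, evenO_xE α u hu, oddO_xE α u hu, pdO_zero, sub_zero]

lemma primeE_primeE (hm : 0 < m) (i : Fin (2 * m)) : primeE m (primeE m i) = i := by
  have hi := i.isLt
  unfold primeE
  by_cases h : (i : ℕ) < m
  · rw [dif_pos h, dif_neg (by simp)]
    exact Fin.ext (by simp)
  · rw [dif_neg h, dif_pos (by simp; omega)]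
    exact Fin.ext (by simp; omega)

lemma primeE_inj (hm : 0 < m) (i j : Fin (2 * m)) (h : primeE m i = primeE m j) : i = j := by
  have := congrArg (primeE m) h
  rwa [primeE_primeE hm, primeE_primeE hm] at this

lemma tauF_ne_zero (i : Fin (2 * m)) : tauF m F i ≠ 0 := by
  unfold tauF
  split
  · exact one_ne_zero
  · simp

lemma mul_xE_z_empty_left (hq : ∀ j, 0 < p ^ t j) (s' : Fin (2 * m)) (g : O p m n t F) :
    mul p m n t F (xE p m n t F (sing t 0 hq s') ∅) g = g := by
  funext b
  rw [mul_xE_left, if_pos ⟨fun i => by rw [sing_val]; simp, Finset.empty_subset _⟩]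
  rw [sgn_left_empty]
  have h1 : (∏ i, (((b.1 i : ℕ).choose (((sing t 0 hq s') i : ℕ))) : F)) = 1 := by
    refine Finset.prod_eq_one fun i _ => ?_
    rw [sing_val]
    simp
  rw [h1, one_mul, one_mul]
  congr 1
  refine Prod.ext ?_ (Finset.sdiff_empty)
  funext i
  refine Fin.ext ?_
  show (b.1 i : ℕ) - ((sing t 0 hq s') i : ℕ) = (b.1 i : ℕ)
  rw [sing_val]; simp

lemma mul_xE_z_empty_right (hq : ∀ j, 0 < p ^ t j) (s' : Fin (2 * m)) (g : O p m n t F) :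
    mul p m n t F g (xE p m n t F (sing t 0 hq s') ∅) = g := by
  funext b
  rw [mul_xE_right, if_pos ⟨fun i => by rw [sing_val]; simp, Finset.empty_subset _⟩]
  rw [Finset.sdiff_empty, Finset.sdiff_self, sgn_right_empty]
  have h1 : (∏ i, (((b.1 i : ℕ).choose ((b.1 i : ℕ) - ((sing t 0 hq s') i : ℕ))) : F)) = 1 := by
    refine Finset.prod_eq_one fun i _ => ?_
    rw [sing_val]
    simp
  rw [h1, one_mul, one_mul]
  congr 1
  refine Prod.ext ?_ rfl
  funext i
  refine Fin.ext ?_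
  show (b.1 i : ℕ) - ((sing t 0 hq s') i : ℕ) = (b.1 i : ℕ)
  rw [sing_val]; simp

lemma pd_xE_z_empty (hq : ∀ j, 0 < p ^ t j) (s₀ : Fin (2 * m)) (i : Y m n) :
    pd p m n t F i (xE p m n t F (sing t 0 hq s₀) ∅) = 0 := by
  cases i with
  | inl j => exact pdE_xE_z hq s₀ j ∅
  | inr k => exact pdO_xE_of_notMem k _ ∅ (Finset.notMem_empty k)

lemma DH_single_empty (hm : 0 < m) (q : ℕ) (hq1 : ∀ j, q + 1 < p ^ t j)
    (hq : ∀ j, q < p ^ t j) (s' : Fin (2 * m)) :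
    DH p m n t F (xE p m n t F (sing t (q + 1) hq1 s') ∅)
      = fun i => if i = Sum.inl (primeE m s') then
          tauF m F s' • xE p m n t F (sing t q hq s') ∅ else 0 := by
  funext i
  cases i with
  | inl j =>
    rw [DH_xE_inl _ _ (by simp), pdE_xE_sing q hq1 hq s' (primeE m j) ∅]
    by_cases hj : j = primeE m s'
    · subst hj
      rw [if_pos rfl, if_pos (primeE_primeE hm s'), primeE_primeE hm s']
    · rw [if_neg (fun hps => hj (by rw [← hps]; exact (primeE_primeE hm j).symm)),
        smul_zero, if_neg (by simpa using hj)]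
  | inr k =>
    rw [DH_xE_inr _ _ (by simp), pdO_xE_of_notMem k _ ∅ (Finset.notMem_empty k),
      if_neg (by simp)]

lemma act_D_xE_single_empty (D : W p m n t F) (q : ℕ) (hq1 : ∀ j, q + 1 < p ^ t j)
    (hq : ∀ j, q < p ^ t j) (r : Fin (2 * m)) (b : BIdx p m n t) :
    act p m n t F D (xE p m n t F (sing t (q + 1) hq1 r) ∅) b
      = mul p m n t F (D (Sum.inl r)) (xE p m n t F (sing t q hq r) ∅) b := by
  rw [act_apply, Fintype.sum_eq_single (Sum.inl r : Y m n)]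
  · show mul p m n t F (D (Sum.inl r)) (pdE p m n t F r _) b = _
    rw [pdE_xE_sing q hq1 hq r r ∅, if_pos rfl]
  · intro i hi
    cases i with
    | inl j =>
      show mul p m n t F (D (Sum.inl j)) (pdE p m n t F j _) b = 0
      rw [pdE_xE_sing q hq1 hq r j ∅, if_neg (by simpa using hi), mul_zero_right,
        Pi.zero_apply]
    | inr k =>
      show mul p m n t F (D (Sum.inr k)) (pdO p m n t F k _) b = 0
      rw [pdO_xE_of_notMem k _ ∅ (Finset.notMem_empty k), mul_zero_right, Pi.zero_apply]

lemma act_D_xE_z_set (D : W p m n t F) (hq : ∀ j, 0 < p ^ t j) (s₀ : Fin (2 * m))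
    (w : Finset (Fin n)) (b : BIdx p m n t) :
    act p m n t F D (xE p m n t F (sing t 0 hq s₀) w) b
      = ∑ r ∈ w, ((-1 : F) ^ (((w.erase r).filter fun j => j < r).card)) *
          mul p m n t F (D (Sum.inr r)) (xE p m n t F (sing t 0 hq s₀) (w.erase r)) b := by
  rw [act_apply, Fintype.sum_sum_type]
  have h1 : (∑ j : Fin (2 * m),
      mul p m n t F (D (Sum.inl j)) (pd p m n t F (Sum.inl j) (xE p m n t F (sing t 0 hq s₀) w)) b)
      = 0 := by
    refine Finset.sum_eq_zero fun j _ => ?_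
    show mul p m n t F (D (Sum.inl j)) (pdE p m n t F j _) b = 0
    rw [pdE_xE_z hq s₀ j w, mul_zero_right, Pi.zero_apply]
  rw [h1, zero_add]
  rw [← Finset.sum_subset (Finset.subset_univ w) (fun r _ hr => by
    show mul p m n t F (D (Sum.inr r)) (pdO p m n t F r _) b = 0
    rw [pdO_xE_of_notMem r _ w hr, mul_zero_right, Pi.zero_apply])]
  refine Finset.sum_congr rfl fun r hr => ?_
  show mul p m n t F (D (Sum.inr r)) (pdO p m n t F r _) b = _
  rw [pdO_xE_of_mem r _ w hr, mul_smul_right, Pi.smul_apply, smul_eq_mul]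

lemma act_DH_z_set (hq : ∀ j, 0 < p ^ t j) (s₀ : Fin (2 * m))
    (v : Finset (Fin n)) (hv : v.card % 2 = 0) (g : O p m n t F) (b : BIdx p m n t) :
    act p m n t F (DH p m n t F (xE p m n t F (sing t 0 hq s₀) v)) g b
      = ∑ r ∈ v, ((-1 : F) ^ (((v.erase r).filter fun j => j < r).card)) *
          mul p m n t F (xE p m n t F (sing t 0 hq s₀) (v.erase r)) (pd p m n t F (Sum.inr r) g) b := by
  rw [act_apply, Fintype.sum_sum_type]
  have h1 : (∑ j : Fin (2 * m),
      mul p m n t F (DH p m n t F (xE p m n t F (sing t 0 hq s₀) v) (Sum.inl j))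
        (pd p m n t F (Sum.inl j) g) b) = 0 := by
    refine Finset.sum_eq_zero fun j _ => ?_
    rw [DH_xE_inl _ _ hv j, pdE_xE_z hq s₀ (primeE m j) v, smul_zero, mul_zero_left,
      Pi.zero_apply]
  rw [h1, zero_add]
  rw [← Finset.sum_subset (Finset.subset_univ v) (fun r _ hr => by
    rw [DH_xE_inr _ _ hv r, pdO_xE_of_notMem r _ v hr, mul_zero_left, Pi.zero_apply])]
  refine Finset.sum_congr rfl fun r hr => ?_
  rw [DH_xE_inr _ _ hv r, pdO_xE_of_mem r _ v hr, mul_smul_left, Pi.smul_apply, smul_eq_mul]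

lemma oddW_eq_zero (D : W p m n t F) (hD : D ∈ calW p m n t F) :
    oddW p m n t F D = 0 := by
  funext i
  cases i with
  | inl j =>
    show oddO p m n t F (D (Sum.inl j)) = 0
    funext b
    unfold oddO
    split
    · exact hD (Sum.inl j) b (by simp; omega)
    · rfl
  | inr k =>
    show evenO p m n t F (D (Sum.inr k)) = 0
    funext b
    unfold evenO
    split
    · exact hD (Sum.inr k) b (by simp; omega)
    · rfl

lemma cent_eq (D X : W p m n t F) (hD : D ∈ calW p m n t F)
    (hbra : bra p m n t F D X = 0) (j : Y m n) (b : BIdx p m n t) :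
    act p m n t F D (X j) b = act p m n t F X (D j) b := by
  have hodd := oddW_eq_zero D hD
  have h := congrFun (congrFun hbra j) b
  unfold bra at h
  rw [hodd] at h
  simp only [Pi.zero_apply, act_zero_right, Pi.sub_apply, Pi.add_apply, add_zero] at h
  exact sub_eq_zero.mp h



lemma act_smul_right (D : W p m n t F) (c : F) (f : O p m n t F) :
    act p m n t F D (c • f) = c • act p m n t F D f := by
  funext b
  rw [act_apply, Pi.smul_apply, act_apply, smul_eq_mul, Finset.mul_sum]
  refine Finset.sum_congr rfl fun i _ => ?_
  rw [pd_smul, mul_smul_right, Pi.smul_apply, smul_eq_mul]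

lemma mul_xE_z_left_eval (hA : ∀ j, 0 < p ^ t j) (i₀ : Fin (2 * m)) (w : Finset (Fin n))
    (g : O p m n t F) (b : BIdx p m n t) :
    mul p m n t F (xE p m n t F (sing t 0 hA i₀) w) g b
      = if w ⊆ b.2 then sgn n F w (b.2 \ w) * g (b.1, b.2 \ w) else 0 := by
  rw [mul_xE_left]
  by_cases hw : w ⊆ b.2
  · rw [if_pos ⟨fun i => by rw [sing_val]; simp, hw⟩, if_pos hw]
    have h1 : (∏ i, (((b.1 i : ℕ).choose (((sing t 0 hA i₀) i : ℕ))) : F)) = 1 :=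
      Finset.prod_eq_one fun i _ => by rw [sing_val]; simp
    rw [h1, mul_one]
    exact congrArg (sgn n F w (b.2 \ w) * ·) (congrArg g (Prod.ext
      (funext fun i => Fin.ext
        (show (b.1 i : ℕ) - ((sing t 0 hA i₀) i : ℕ) = (b.1 i : ℕ) from by
          rw [sing_val]; simp)) rfl))
  · rw [if_neg (fun h => hw h.2), if_neg hw]

lemma mul_xE_z_right_eval (hA : ∀ j, 0 < p ^ t j) (i₀ : Fin (2 * m)) (w : Finset (Fin n))
    (g : O p m n t F) (b : BIdx p m n t) :
    mul p m n t F g (xE p m n t F (sing t 0 hA i₀) w) b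
      = if w ⊆ b.2 then sgn n F (b.2 \ w) w * g (b.1, b.2 \ w) else 0 := by
  rw [mul_xE_right]
  by_cases hw : w ⊆ b.2
  · rw [if_pos ⟨fun i => by rw [sing_val]; simp, hw⟩, if_pos hw]
    rw [Finset.sdiff_sdiff_eq_self hw]
    have h1 : (∏ i, (((b.1 i : ℕ).choose ((b.1 i : ℕ) - (((sing t 0 hA i₀) i : ℕ)))) : F)) = 1 :=
      Finset.prod_eq_one fun i _ => by rw [sing_val]; simp
    rw [h1, mul_one]
    exact congrArg (sgn n F (b.2 \ w) w * ·) (congrArg g (Prod.ext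
      (funext fun i => Fin.ext
        (show (b.1 i : ℕ) - ((sing t 0 hA i₀) i : ℕ) = (b.1 i : ℕ) from by
          rw [sing_val]; simp)) rfl))
  · rw [if_neg (fun h => hw h.2), if_neg hw]

lemma pd_inr_pair (c : Fin n) (g : O p m n t F) (β : MIdx p m t) (w : Finset (Fin n)) :
    pd p m n t F (Sum.inr c) g (β, w)
      = if c ∈ w then 0
        else ((-1 : F) ^ ((w.filter fun j => j < c).card)) * g (β, insert c w) := rfl

lemma sing_not_isPi (hm : 0 < m) (hpt : ∀ j, 3 < p ^ t j) (q : ℕ) (hq3 : q < 3)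
    (hq : ∀ j, q < p ^ t j) (i : Fin (2 * m)) : ¬ isPi p m t (sing t q hq i) := by
  intro hPi
  have h2m : 1 < 2 * m := by omega
  by_cases h : (i : ℕ) = 0
  · have hj := hPi ⟨1, h2m⟩
    rw [sing_val, if_neg (fun hc => by
      have h5 : (1 : ℕ) = (i : ℕ) := congrArg Fin.val hc
      omega)] at hj
    have := hpt ⟨1, h2m⟩
    omega
  · have hj := hPi ⟨0, by omega⟩
    rw [sing_val, if_neg (fun hc => by
      have h5 : (0 : ℕ) = (i : ℕ) := congrArg Fin.val hc
      omega)] at hj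
    have := hpt ⟨0, by omega⟩
    omega

lemma mem_frakN (α : MIdx p m t) (u : Finset (Fin n)) (hu : Even u.card)
    (h1 : ¬(isPi p m t α ∧ u = Finset.univ)) (h2 : ¬(isPi p m t α ∧ u = ∅)) :
    DH p m n t F (xE p m n t F α u) ∈ frakN p m n t F :=
  Submodule.subset_span ⟨α, u, hu, h1, h2, rfl⟩

lemma pair_erase_left (k l : Fin n) (h : k ≠ l) :
    ({k, l} : Finset (Fin n)).erase k = {l} :=
  Finset.erase_insert (by simp [h])

lemma pair_erase_right (k l : Fin n) (h : k ≠ l) :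
    ({k, l} : Finset (Fin n)).erase l = {k} := by
  rw [Finset.erase_insert_of_ne h, Finset.erase_singleton]
  rfl

lemma sdiff_erase_self {s : Finset (Fin n)} {r : Fin n} (h : r ∈ s) :
    s \ s.erase r = {r} := by
  ext x
  simp only [Finset.mem_sdiff, Finset.mem_erase, Finset.mem_singleton, not_and]
  constructor
  · rintro ⟨h1, h2⟩
    by_contra hne
    exact (h2 hne) h1
  · rintro rfl
    exact ⟨h, fun hc => absurd rfl hc⟩

lemma sgn_ne_zero (u v : Finset (Fin n)) : sgn n F u v ≠ 0 :=
  pow_ne_zero _ (neg_ne_zero.mpr one_ne_zero)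

lemma npow_ne_zero (e : ℕ) : ((-1 : F) ^ e) ≠ 0 :=
  pow_ne_zero _ (neg_ne_zero.mpr one_ne_zero)

lemma triple_unit {a s c x : F} (ha : a ≠ 0) (hs : s ≠ 0) (hc : c ≠ 0)
    (h : 0 = a * (s * (c * x))) : x = 0 := by
  rcases mul_eq_zero.mp h.symm with h1 | h1
  · exact absurd h1 ha
  rcases mul_eq_zero.mp h1 with h2 | h2
  · exact absurd h2 hs
  rcases mul_eq_zero.mp h2 with h3 | h3
  · exact absurd h3 hc
  · exact h3


end AuxLemmas

/-- if `n` is odd, the centralizer of `𝔑` in `𝒲` is zero. -/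
theorem stmt2 (p m n : ℕ) (t : Fin (2 * m) → ℕ) (F : Type) [Field F]
    (hp : 3 < p) (hchar : CharP F p) (hm : 1 < m) (hn : 3 < n) (ht : ∀ i, 1 ≤ t i) (hno : Odd n) :
    ∀ D ∈ calW p m n t F,
      (∀ X ∈ frakN p m n t F, bra p m n t F D X = 0) → D = 0 := by
  intro D hD hcent
  classical
  have hm0 : 0 < m := by omega
  have hpt : ∀ j, 3 < p ^ t j := fun j =>
    lt_of_lt_of_le hp (by
      calc p = p ^ 1 := (pow_one p).symm
        _ ≤ p ^ t j := Nat.pow_le_pow_right (by omega) (ht j))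
  have hA : ∀ j, 0 < p ^ t j := fun j => by have := hpt j; omega
  have hB : ∀ j, 0 + 1 < p ^ t j := fun j => by have := hpt j; omega
  have hC : ∀ j, (0 + 1) + 1 < p ^ t j := fun j => by have := hpt j; omega
  have hnotPi : ∀ (q : ℕ), q < 3 → ∀ (hq : ∀ j, q < p ^ t j) (i : Fin (2 * m)) (P : Prop),
      ¬ (isPi p m t (sing t q hq i) ∧ P) := by
    intro q hq3 hq i P h
    exact sing_not_isPi hm0 hpt q hq3 hq i h.1
  -- Step 1 : all partial derivatives pdE s (D j) vanish
  have hstep1 : ∀ (s : Fin (2 * m)) (j : Y m n) (b : BIdx p m n t),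
      pdE p m n t F s (D j) b = 0 := by
    intro s j b
    set s' : Fin (2 * m) := primeE m s with hs'
    have hDH := DH_single_empty (p := p) (n := n) (t := t) (F := F) hm0 0 hB hA s'
    have hmem : DH p m n t F (xE p m n t F (sing t (0 + 1) hB s') ∅) ∈ frakN p m n t F :=
      mem_frakN _ _ (by simp) (hnotPi _ (by omega) hB s' _) (hnotPi _ (by omega) hB s' _)
    have heq := cent_eq D _ hD (hcent _ hmem) j b
    rw [hDH] at heq
    simp only [] at heq
    -- left side is zero
    have hL : act p m n t F D
        (if j = Sum.inl (primeE m s') then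
          tauF m F s' • xE p m n t F (sing t 0 hA s') ∅ else 0) b = 0 := by
      split
      · rw [act_smul_right, act_of_pd_zero D _ (pd_xE_z_empty hA s'), Pi.smul_apply,
          Pi.zero_apply, smul_zero]
      · rw [act_zero_right, Pi.zero_apply]
    rw [hL] at heq
    -- right side
    rw [act_single (Sum.inl (primeE m s')) _ (D j), mul_smul_left,
      mul_xE_z_empty_left hA s'] at heq
    have hps : primeE m s' = s := primeE_primeE hm0 s
    rw [hps] at heq
    have heq2 : tauF m F s' * pdE p m n t F s (D j) b = 0 := heq.symm
    rcases mul_eq_zero.mp heq2 with h | h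
    · exact absurd h (tauF_ne_zero s')
    · exact h
  -- Step 1' : coefficients vanish off α = 0
  have hstep1' : ∀ (j : Y m n) (β : MIdx p m t) (u : Finset (Fin n)),
      (∃ i, (β i : ℕ) ≠ 0) → D j (β, u) = 0 := by
    rintro j β u ⟨i, hi⟩
    have hb := hstep1 i j
      (⟨Function.update β i (⟨(β i : ℕ) - 1,
          lt_of_le_of_lt (Nat.sub_le _ _) (β i).isLt⟩ : Fin (p ^ t i)), u⟩)
    simp only [pdE] at hb
    have hcond : ((Function.update β i (⟨(β i : ℕ) - 1,
        lt_of_le_of_lt (Nat.sub_le _ _) (β i).isLt⟩ : Fin (p ^ t i))) i : ℕ) + 1 < p ^ t i := by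
      rw [Function.update_self]
      show ((β i : ℕ) - 1) + 1 < p ^ t i
      have := (β i).isLt
      omega
    rw [dif_pos hcond] at hb
    rw [Function.update_idem] at hb
    have hval : (Function.update β i
        (⟨((Function.update β i (⟨(β i : ℕ) - 1,
            lt_of_le_of_lt (Nat.sub_le _ _) (β i).isLt⟩ : Fin (p ^ t i))) i : ℕ) + 1,
          hcond⟩ : Fin (p ^ t i))) = β := by
      funext j'
      by_cases hj : j' = i
      · subst hj
        rw [Function.update_self]
        refine Fin.ext ?_
        show ((Function.update β j' (⟨(β j' : ℕ) - 1,
            lt_of_le_of_lt (Nat.sub_le _ _) (β j').isLt⟩ : Fin (p ^ t j'))) j' : ℕ) + 1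
            = (β j' : ℕ)
        rw [Function.update_self]
        show ((β j' : ℕ) - 1) + 1 = (β j' : ℕ)
        omega
      · rw [Function.update_of_ne hj]
    rw [hval] at hb
    exact hb
  -- Step 2 : D vanishes on even directions
  have hstep2 : ∀ (r : Fin (2 * m)) (b : BIdx p m n t), D (Sum.inl r) b = 0 := by
    intro r b
    have hDH := DH_single_empty (p := p) (n := n) (t := t) (F := F) hm0 (0 + 1) hC hB r
    have hmem : DH p m n t F (xE p m n t F (sing t (0 + 1 + 1) hC r) ∅) ∈ frakN p m n t F :=
      mem_frakN _ _ (by simp) (hnotPi _ (by omega) hC r _) (hnotPi _ (by omega) hC r _)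
    have heq := cent_eq D _ hD (hcent _ hmem) (Sum.inl (primeE m r)) b
    rw [hDH] at heq
    beta_reduce at heq
    rw [if_pos rfl] at heq
    rw [act_smul_right, Pi.smul_apply, smul_eq_mul,
      act_D_xE_single_empty D 0 hB hA r b, mul_xE_z_empty_right hA r] at heq
    have hz : pd p m n t F (Sum.inl (primeE m r)) (D (Sum.inl (primeE m r))) = 0 :=
      funext fun b' => hstep1 (primeE m r) _ b'
    rw [act_single, hz, mul_zero_right, Pi.zero_apply] at heq
    rcases mul_eq_zero.mp heq with h | h
    · exact absurd h (tauF_ne_zero r)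
    · exact h
  -- Step 3 : parity of the odd coefficients
  have hstep3 : ∀ (k : Fin n) (b : BIdx p m n t), b.2.card % 2 = 0 → D (Sum.inr k) b = 0 := by
    intro k b hb
    refine hD (Sum.inr k) b ?_
    show ¬ (b.2.card + 1) % 2 = 0
    omega
  -- odd part machinery
  have i₀ : Fin (2 * m) := ⟨0, by omega⟩
  have pairMem : ∀ k l : Fin n, k ≠ l →
      DH p m n t F (xE p m n t F (sing t 0 hA i₀) {k, l}) ∈ frakN p m n t F := by
    intro k l hkl
    refine mem_frakN _ _ ?_ (hnotPi 0 (by omega) hA i₀ _) (hnotPi 0 (by omega) hA i₀ _)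
    rw [Finset.card_pair hkl]
    exact even_two
  have pairEq : ∀ k l : Fin n, k ≠ l → ∀ (j : Y m n) (b : BIdx p m n t),
      act p m n t F D (DH p m n t F (xE p m n t F (sing t 0 hA i₀) {k, l}) j) b
        = act p m n t F (DH p m n t F (xE p m n t F (sing t 0 hA i₀) {k, l})) (D j) b :=
    fun k l hkl j b => cent_eq D _ hD (hcent _ (pairMem k l hkl)) j b
  have pairRHS : ∀ k l : Fin n, k ≠ l → ∀ (g : O p m n t F) (b : BIdx p m n t),
      act p m n t F (DH p m n t F (xE p m n t F (sing t 0 hA i₀) {k, l})) g b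
        = (-1 : F) ^ ((({l} : Finset (Fin n)).filter fun j => j < k).card)
            * (if {l} ⊆ b.2 then sgn n F {l} (b.2 \ {l})
                * pd p m n t F (Sum.inr k) g (b.1, b.2 \ {l}) else 0)
          + (-1 : F) ^ ((({k} : Finset (Fin n)).filter fun j => j < l).card)
            * (if {k} ⊆ b.2 then sgn n F {k} (b.2 \ {k})
                * pd p m n t F (Sum.inr l) g (b.1, b.2 \ {k}) else 0) := by
    intro k l hkl g b
    rw [act_DH_z_set hA i₀ {k, l} (by rw [Finset.card_pair hkl]) g b, Finset.sum_pair hkl,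
      pair_erase_left k l hkl, pair_erase_right k l hkl,
      mul_xE_z_left_eval, mul_xE_z_left_eval]
  have pairLHSk : ∀ k l : Fin n, k ≠ l → ∀ (b : BIdx p m n t),
      act p m n t F D (DH p m n t F (xE p m n t F (sing t 0 hA i₀) {k, l}) (Sum.inr k)) b
        = (-1 : F) ^ ((({l} : Finset (Fin n)).filter fun j => j < k).card)
            * D (Sum.inr l) b := by
    intro k l hkl b
    rw [DH_xE_inr _ _ (by rw [Finset.card_pair hkl]) k,
      pdO_xE_of_mem k _ _ (Finset.mem_insert_self k {l}), pair_erase_left k l hkl,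
      act_smul_right, Pi.smul_apply, smul_eq_mul]
    congr 1
    rw [act_D_xE_z_set D hA i₀ {l} b, Finset.sum_singleton, Finset.erase_singleton,
      Finset.filter_empty, Finset.card_empty, pow_zero, one_mul,
      mul_xE_z_empty_right hA i₀]
  have pairLHS0 : ∀ k l : Fin n, k ≠ l → ∀ (s : Fin n), s ∉ ({k, l} : Finset (Fin n)) →
      ∀ (b : BIdx p m n t),
      act p m n t F D (DH p m n t F (xE p m n t F (sing t 0 hA i₀) {k, l}) (Sum.inr s)) b = 0 := by
    intro k l hkl s hs b
    rw [DH_xE_inr _ _ (by rw [Finset.card_pair hkl]) s, pdO_xE_of_notMem s _ _ hs,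
      act_zero_right, Pi.zero_apply]
  -- kill 1 : sets with a member ≠ s and a non-member ≠ s
  have hkill1 : ∀ (s : Fin n) (β : MIdx p m t) (w : Finset (Fin n)),
      (∃ k, k ∈ w ∧ k ≠ s) → (∃ l, l ∉ w ∧ l ≠ s) → D (Sum.inr s) (β, w) = 0 := by
    rintro s β w ⟨k, hkw, hks⟩ ⟨l, hlw, hls⟩
    have hkl : k ≠ l := fun h => hlw (h ▸ hkw)
    have hskl : s ∉ ({k, l} : Finset (Fin n)) := by
      intro hmem
      rcases Finset.mem_insert.mp hmem with h | h
      · exact hks h.symm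
      · exact hls (Finset.mem_singleton.mp h).symm
    have heq := pairEq k l hkl (Sum.inr s) (β, insert l (w.erase k))
    rw [pairLHS0 k l hkl s hskl, pairRHS k l hkl] at heq
    have hku : ¬ ({k} : Finset (Fin n)) ⊆ ((β, insert l (w.erase k)) : BIdx p m n t).2 := by
      rw [Finset.singleton_subset_iff]
      show k ∉ insert l (w.erase k)
      simp [hkl]
    have hlu : ({l} : Finset (Fin n)) ⊆ ((β, insert l (w.erase k)) : BIdx p m n t).2 := by
      rw [Finset.singleton_subset_iff]
      exact Finset.mem_insert_self l _
    rw [if_neg hku, mul_zero, add_zero, if_pos hlu] at heq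
    have hsd : (((β, insert l (w.erase k)) : BIdx p m n t).2) \ {l} = w.erase k := by
      show (insert l (w.erase k)) \ {l} = w.erase k
      rw [Finset.sdiff_singleton_eq_erase,
        Finset.erase_insert (fun hl => hlw (Finset.mem_of_mem_erase hl))]
    rw [hsd, pd_inr_pair, if_neg (Finset.notMem_erase k w), Finset.insert_erase hkw] at heq
    exact triple_unit (npow_ne_zero _) (sgn_ne_zero _ _) (npow_ne_zero _) heq
  -- kill 2 : the full set
  have hkill_univ : ∀ (s : Fin n) (β : MIdx p m t),
      D (Sum.inr s) (β, (Finset.univ : Finset (Fin n))) = 0 := by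
    intro s β
    have hk : ∃ k : Fin n, k ≠ s := by
      by_cases h : (s : ℕ) = 0
      · refine ⟨⟨1, by omega⟩, fun hc => ?_⟩
        have h5 : (1 : ℕ) = (s : ℕ) := congrArg Fin.val hc
        omega
      · refine ⟨⟨0, by omega⟩, fun hc => ?_⟩
        have h5 : (0 : ℕ) = (s : ℕ) := congrArg Fin.val hc
        omega
    obtain ⟨k, hks⟩ := hk
    have heq := pairEq k s hks (Sum.inr k) (β, (Finset.univ : Finset (Fin n)))
    rw [pairLHSk k s hks, pairRHS k s hks] at heq
    rw [if_pos (Finset.subset_univ _), if_pos (Finset.subset_univ _)] at heq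
    rw [pd_inr_pair, if_pos (by simp [hks]), pd_inr_pair, if_pos (by simp [Ne.symm hks])] at heq
    rw [mul_zero, mul_zero, mul_zero, mul_zero, add_zero] at heq
    rcases mul_eq_zero.mp heq with h | h
    · exact absurd h (npow_ne_zero _)
    · exact h
  -- diagonal relation
  have hdiag : ∀ k l : Fin n, k < l → ∀ (β : MIdx p m t),
      D (Sum.inr l) (β, ({l} : Finset (Fin n))) = D (Sum.inr k) (β, ({k} : Finset (Fin n))) := by
    intro k l hkl β
    have hne : k ≠ l := ne_of_lt hkl
    have heq := pairEq k l hne (Sum.inr k) (β, ({l} : Finset (Fin n)))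
    rw [pairLHSk k l hne, pairRHS k l hne] at heq
    rw [show (({l} : Finset (Fin n)).filter fun j => j < k) = ∅ from by
        rw [Finset.filter_singleton, if_neg (asymm hkl)],
      show (({k} : Finset (Fin n)).filter fun j => j < l) = {k} from by
        rw [Finset.filter_singleton, if_pos hkl]] at heq
    rw [if_pos (Finset.Subset.refl _), if_neg (by
      rw [Finset.singleton_subset_iff]
      show k ∉ ({l} : Finset (Fin n))
      simp [hne]), mul_zero, add_zero] at heq
    rw [show ((β, ({l} : Finset (Fin n))) : BIdx p m n t).2 \ {l} = ∅ from Finset.sdiff_self _] at heq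
    rw [pd_inr_pair, if_neg (Finset.notMem_empty k), Finset.filter_empty,
      Finset.card_empty, pow_zero, one_mul] at heq
    rw [show sgn n F {l} (∅ : Finset (Fin n)) = 1 from sgn_right_empty _, one_mul,
      show (insert k (∅ : Finset (Fin n))) = {k} from rfl] at heq
    simpa using heq
  -- distinguished elements 0,1,2,3 of Fin n
  obtain ⟨e0, he0⟩ : ∃ e : Fin n, (e : ℕ) = 0 := ⟨⟨0, by omega⟩, rfl⟩
  obtain ⟨e1, he1⟩ : ∃ e : Fin n, (e : ℕ) = 1 := ⟨⟨1, by omega⟩, rfl⟩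
  obtain ⟨e2, he2⟩ : ∃ e : Fin n, (e : ℕ) = 2 := ⟨⟨2, by omega⟩, rfl⟩
  obtain ⟨e3, he3⟩ : ∃ e : Fin n, (e : ℕ) = 3 := ⟨⟨3, by omega⟩, rfl⟩
  have h01 : e0 < e1 := by simp only [Fin.lt_def, he0, he1]; omega
  have h02 : e0 < e2 := by simp only [Fin.lt_def, he0, he2]; omega
  have h03 : e0 < e3 := by simp only [Fin.lt_def, he0, he3]; omega
  have h12 : e1 < e2 := by simp only [Fin.lt_def, he1, he2]; omega
  have h13 : e1 < e3 := by simp only [Fin.lt_def, he1, he3]; omega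
  have h23 : e2 < e3 := by simp only [Fin.lt_def, he2, he3]; omega
  have ne01 : e0 ≠ e1 := ne_of_lt h01
  have ne02 : e0 ≠ e2 := ne_of_lt h02
  have ne03 : e0 ≠ e3 := ne_of_lt h03
  have ne12 : e1 ≠ e2 := ne_of_lt h12
  have ne13 : e1 ≠ e3 := ne_of_lt h13
  have ne23 : e2 ≠ e3 := ne_of_lt h23
  have hp2 : (2 : F) ≠ 0 := by
    intro h
    have hd : p ∣ 2 := (CharP.cast_eq_zero_iff F p 2).mp (by exact_mod_cast h)
    have := Nat.le_of_dvd (by norm_num) hd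
    omega
  -- the diagonal coefficients vanish
  have hc0 : ∀ (r : Fin n) (β : MIdx p m t),
      D (Sum.inr r) (β, ({r} : Finset (Fin n))) = 0 := by
    have hbase : ∀ (β : MIdx p m t),
        D (Sum.inr e0) (β, ({e0} : Finset (Fin n))) = 0 := by
      intro β
      have hcard4 : ({e0, e1, e2, e3} : Finset (Fin n)).card = 4 := by
        rw [Finset.card_insert_of_notMem (by simp [ne01, ne02, ne03]),
          Finset.card_insert_of_notMem (by simp [ne12, ne13]),
          Finset.card_insert_of_notMem (by simp [ne23]), Finset.card_singleton]
      have hU3 : ({e0, e1, e2, e3} : Finset (Fin n)).erase e3 = {e0, e1, e2} := by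
        rw [Finset.erase_insert_of_ne ne03, Finset.erase_insert_of_ne ne13,
          Finset.erase_insert_of_ne ne23, Finset.erase_singleton]
        rfl
      have hE0 : ({e0, e1, e2} : Finset (Fin n)).erase e0 = {e1, e2} :=
        Finset.erase_insert (by simp [ne01, ne02])
      have hE1 : ({e0, e1, e2} : Finset (Fin n)).erase e1 = {e0, e2} := by
        rw [Finset.erase_insert_of_ne ne01, Finset.erase_insert (by simp [ne12])]
      have hE2 : ({e0, e1, e2} : Finset (Fin n)).erase e2 = {e0, e1} := by
        rw [Finset.erase_insert_of_ne ne02, Finset.erase_insert_of_ne ne12,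
          Finset.erase_singleton]
        rfl
      have hmem : DH p m n t F (xE p m n t F (sing t 0 hA i₀) {e0, e1, e2, e3})
          ∈ frakN p m n t F :=
        mem_frakN _ _ (by rw [hcard4]; exact ⟨2, rfl⟩)
          (hnotPi 0 (by omega) hA i₀ _) (hnotPi 0 (by omega) hA i₀ _)
      have heq := cent_eq D _ hD (hcent _ hmem) (Sum.inr e3)
        (β, ({e0, e1, e2} : Finset (Fin n)))
      -- left-hand side
      rw [DH_xE_inr _ _ (by rw [hcard4]) e3,
        pdO_xE_of_mem e3 _ _ (by simp), hU3,
        act_smul_right, Pi.smul_apply, smul_eq_mul,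
        act_D_xE_z_set D hA i₀ {e0, e1, e2} _] at heq
      rw [Finset.sum_insert (by simp [ne01, ne02]),
        Finset.sum_insert (by simp [ne12]), Finset.sum_singleton] at heq
      rw [hE0, hE1, hE2] at heq
      rw [mul_xE_z_right_eval, mul_xE_z_right_eval, mul_xE_z_right_eval] at heq
      -- right-hand side
      rw [act_DH_z_set hA i₀ {e0, e1, e2, e3} (by rw [hcard4]) _ _] at heq
      rw [Finset.sum_insert (by simp [ne01, ne02, ne03]),
        Finset.sum_insert (by simp [ne12, ne13]),
        Finset.sum_insert (by simp [ne23]), Finset.sum_singleton] at heq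
      rw [show ({e0, e1, e2, e3} : Finset (Fin n)).erase e0 = {e1, e2, e3} from
          Finset.erase_insert (by simp [ne01, ne02, ne03]),
        show ({e0, e1, e2, e3} : Finset (Fin n)).erase e1 = {e0, e2, e3} from by
          rw [Finset.erase_insert_of_ne ne01, Finset.erase_insert (by simp [ne12, ne13])],
        show ({e0, e1, e2, e3} : Finset (Fin n)).erase e2 = {e0, e1, e3} from by
          rw [Finset.erase_insert_of_ne ne02, Finset.erase_insert_of_ne ne12,
            Finset.erase_insert (by simp [ne23])],
        hU3] at heq
      rw [mul_xE_z_left_eval, mul_xE_z_left_eval, mul_xE_z_left_eval,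
        mul_xE_z_left_eval] at heq
      -- subset conditions on the left
      rw [if_pos (show ({e1, e2} : Finset (Fin n)) ⊆ _ from Finset.subset_insert _ _),
        if_pos (show ({e0, e2} : Finset (Fin n)) ⊆ ({e0, e1, e2} : Finset (Fin n)) from by
          intro x hx; simp only [Finset.mem_insert, Finset.mem_singleton] at hx ⊢; tauto),
        if_pos (show ({e0, e1} : Finset (Fin n)) ⊆ ({e0, e1, e2} : Finset (Fin n)) from by
          intro x hx; simp only [Finset.mem_insert, Finset.mem_singleton] at hx ⊢; tauto)] at heq
      -- subset conditions on the right
      rw [if_neg (show ¬ (({e1, e2, e3} : Finset (Fin n)) ⊆ ({e0, e1, e2} : Finset (Fin n))) from by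
          intro hsub
          have := hsub (show e3 ∈ ({e1, e2, e3} : Finset (Fin n)) by simp)
          simp only [Finset.mem_insert, Finset.mem_singleton] at this
          rcases this with h | h | h
          exacts [ne03 h.symm, ne13 h.symm, ne23 h.symm]),
        if_neg (show ¬ (({e0, e2, e3} : Finset (Fin n)) ⊆ ({e0, e1, e2} : Finset (Fin n))) from by
          intro hsub
          have := hsub (show e3 ∈ ({e0, e2, e3} : Finset (Fin n)) by simp)
          simp only [Finset.mem_insert, Finset.mem_singleton] at this
          rcases this with h | h | h
          exacts [ne03 h.symm, ne13 h.symm, ne23 h.symm]),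
        if_neg (show ¬ (({e0, e1, e3} : Finset (Fin n)) ⊆ ({e0, e1, e2} : Finset (Fin n))) from by
          intro hsub
          have := hsub (show e3 ∈ ({e0, e1, e3} : Finset (Fin n)) by simp)
          simp only [Finset.mem_insert, Finset.mem_singleton] at this
          rcases this with h | h | h
          exacts [ne03 h.symm, ne13 h.symm, ne23 h.symm]),
        if_pos (show ({e0, e1, e2} : Finset (Fin n)) ⊆ ({e0, e1, e2} : Finset (Fin n)) from
          Finset.Subset.refl _)] at heq
      -- sdiff computations
      rw [show (({e0, e1, e2} : Finset (Fin n)) \ {e1, e2}) = {e0} from by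
          ext x
          simp only [Finset.mem_sdiff, Finset.mem_insert, Finset.mem_singleton, Fin.ext_iff,
            he0, he1, he2]
          omega,
        show (({e0, e1, e2} : Finset (Fin n)) \ {e0, e2}) = {e1} from by
          ext x
          simp only [Finset.mem_sdiff, Finset.mem_insert, Finset.mem_singleton, Fin.ext_iff,
            he0, he1, he2]
          omega,
        show (({e0, e1, e2} : Finset (Fin n)) \ {e0, e1}) = {e2} from by
          ext x
          simp only [Finset.mem_sdiff, Finset.mem_insert, Finset.mem_singleton, Fin.ext_iff,
            he0, he1, he2]
          omega,
        show (({e0, e1, e2} : Finset (Fin n)) \ {e0, e1, e2}) = ∅ from Finset.sdiff_self _] at heq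
      -- the surviving pd term on the right
      rw [pd_inr_pair, if_neg (Finset.notMem_empty e3), Finset.filter_empty,
        Finset.card_empty, pow_zero, one_mul,
        show (insert e3 (∅ : Finset (Fin n))) = {e3} from rfl] at heq
      rw [show sgn n F ({e0, e1, e2} : Finset (Fin n)) (∅ : Finset (Fin n)) = 1 from
        sgn_right_empty _, one_mul] at heq
      -- numeric values of the signs
      rw [show (({e0, e1, e2} : Finset (Fin n)).filter fun j => j < e3).card = 3 from by
          rw [Finset.filter_insert, if_pos h03, Finset.filter_insert, if_pos h13,
            Finset.filter_singleton, if_pos h23,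
            Finset.card_insert_of_notMem (by simp [ne01, ne02]),
            Finset.card_insert_of_notMem (by simp [ne12]), Finset.card_singleton]] at heq
      rw [sgn_singleton, sgn_singleton, sgn_singleton] at heq
      rw [show (({e1, e2} : Finset (Fin n)).filter fun j => j < e0).card = 0 from by
          rw [Finset.filter_insert, if_neg (asymm h01), Finset.filter_singleton,
            if_neg (asymm h02), Finset.card_empty],
        show (({e0, e2} : Finset (Fin n)).filter fun j => j < e1).card = 1 from by
          rw [Finset.filter_insert, if_pos h01, Finset.filter_singleton,
            if_neg (asymm h12)]
          simp,
        show (({e0, e1} : Finset (Fin n)).filter fun j => j < e2).card = 2 from by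
          rw [Finset.filter_insert, if_pos h02, Finset.filter_singleton, if_pos h12,
            Finset.card_insert_of_notMem (by simp [ne01]), Finset.card_singleton]] at heq
      -- identify the diagonal values
      have hdg1 := hdiag e0 e1 h01 β
      have hdg2 := hdiag e0 e2 h02 β
      have hdg3 := hdiag e0 e3 h03 β
      rw [hdg1, hdg2, hdg3] at heq
      have h2c : (2 : F) * D (Sum.inr e0) (β, ({e0} : Finset (Fin n))) = 0 := by
        norm_num at heq
        linear_combination -heq
      rcases mul_eq_zero.mp h2c with h | h
      · exact absurd h hp2
      · exact h
    intro r β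
    by_cases hr : r = e0
    · subst hr; exact hbase β
    · have h0r : e0 < r := by
        simp only [Fin.lt_def, he0]
        rcases Nat.eq_zero_or_pos (r : ℕ) with h | h
        · exact absurd (Fin.ext (by rw [he0, h]) : r = e0) hr
        · omega
      rw [hdiag e0 r h0r β]
      exact hbase β
  -- endgame
  funext i b
  cases i with
  | inl r => exact hstep2 r b
  | inr s =>
    obtain ⟨β, u⟩ := b
    show D (Sum.inr s) (β, u) = 0
    by_cases hpar : u.card % 2 = 0
    · exact hstep3 s (β, u) hpar
    by_cases huniv : u = Finset.univ
    · subst huniv; exact hkill_univ s β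
    by_cases hk : ∃ k, k ∈ u ∧ k ≠ s
    · by_cases hl : ∃ l, l ∉ u ∧ l ≠ s
      · exact hkill1 s β u hk hl
      · exfalso
        apply hpar
        push_neg at hl
        by_cases hsu : s ∈ u
        · exact absurd (Finset.eq_univ_iff_forall.mpr fun x => by
            by_contra hx
            exact absurd (hl x hx ▸ hsu) hx) huniv
        · have hue : u = Finset.univ.erase s := by
            ext x
            simp only [Finset.mem_erase, Finset.mem_univ, and_true]
            constructor
            · intro hx
              exact fun hxs => hsu (hxs ▸ hx)
            · intro hx
              by_contra hxu
              exact hx (hl x hxu)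
          rw [hue, Finset.card_erase_of_mem (Finset.mem_univ s), Finset.card_univ,
            Fintype.card_fin]
          obtain ⟨w, hw⟩ := hno
          omega
    · push_neg at hk
      have hsub : u ⊆ {s} := fun x hx => Finset.mem_singleton.mpr (hk x hx)
      rcases Finset.subset_singleton_iff.mp hsub with h | h
      · subst h
        exact absurd (by simp : ((∅ : Finset (Fin n)).card % 2 = 0)) hpar
      · subst h
        exact hc0 s β

end HamEven
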